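/- For a simple arrangement H̃ on ground set I, the structure sheaf A on the lattice of flats (with stalks the polynomial rings Sym R^F and restriction maps the projections setting variables e_i, i ∈ F∖E, to zero) is flabby: for every flat F the restriction A(F) → A(∂F) is surjective with kernel the principal ideal generated by ∏_{i∈F} e_i. Consequently A is the minimal extension sheaf L_∅ on L_{H̃}. -/

import Mathlib

open MvPolynomial

variable {I : Type} [Fintype I] [DecidableEq I]

def IsFlat (V : AffineSubspace ℝ (I → ℝ)) (F : Finset I) : Prop :=
  ∃ x ∈ V, ∀ i : I, i ∈ F ↔ x i = 0

def Essential (V : AffineSubspace ℝ (I → ℝ)) : Prop :=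
  ∀ i : I, ∃ x ∈ V, ∃ y ∈ V, x i ≠ y i

noncomputable def resF (V : AffineSubspace ℝ (I → ℝ)) (F : Finset I) :
    V.direction →ₗ[ℝ] ({i : I // i ∈ F} → ℝ) :=
  (LinearMap.funLeft ℝ ℝ (fun i : {i : I // i ∈ F} => (i : I))).comp V.direction.subtype

/-- Simplicity: every flat `F` satisfies `|F| = codim H_F`. -/
def IsSimple (V : AffineSubspace ℝ (I → ℝ)) : Prop :=
  ∀ F : Finset I, IsFlat V F →
    F.card + Module.finrank ℝ (LinearMap.ker (resF V F)) = Module.finrank ℝ V.direction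

/-- The face ideal of a collection of finite subsets of `I`. -/
noncomputable def faceIdeal (Δ : Set (Finset I)) : Ideal (MvPolynomial I ℝ) :=
  Ideal.span {p | ∃ S : Finset I, S ∉ Δ ∧ p = ∏ i ∈ S, (X i : MvPolynomial I ℝ)}

/-- The full simplex on `F`:  its face ring is `Sym ℝ^F`, the stalk of the structure
sheaf of a simple arrangement at the flat `F`. -/
def powFaces (F : Finset I) : Set (Finset I) := {S | S ⊆ F}

/-- The stalk `A(F) ≅ Sym ℝ^F` of the structure sheaf of a simple arrangement,
realized as `ℝ[e_i : i ∈ I] / (e_i : i ∉ F)`. -/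
noncomputable def stalkA (F : Finset I) : MvPolynomial I ℝ →+* (MvPolynomial I ℝ ⧸ faceIdeal (powFaces F)) :=
  Ideal.Quotient.mk (faceIdeal (powFaces F))

/-!
Setting the variables outside `E` to zero keeps exactly the monomials supported in `E`, and it
gives a canonical representative of each class in the stalk `A(E)`. Compatible sections over `∂F`
are therefore polynomials that agree on common monomials, and taking each monomial `m` from the
section at `m.support` glues them. A polynomial vanishes on `∂F` iff each of its monomials
supported in `F` involves every variable of `F`, i.e. is divisible by `∏_{i ∈ F} e_i`.
Simplicity makes the restriction of the direction of `V` to the coordinates in a flat `F`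
surjective, so moving generically along a suitable direction shows that every subset of a flat
is a flat: `∂F` consists of all proper subsets of `F`.
-/

namespace MvPolynomial

variable {σ R : Type*} [CommSemiring R]

theorem mem_span_prod_X_iff {F : Finset σ} {p : MvPolynomial σ R} :
    p ∈ Ideal.span {∏ i ∈ F, X i} ↔ ∀ m ∈ p.support, F ⊆ m.support := by
  classical
  have hprod : ∏ i ∈ F, (X i : MvPolynomial σ R) = monomial (∑ i ∈ F, Finsupp.single i 1) 1 :=
    (monomial_sum_one F _).symm
  rw [hprod, ← Set.image_singleton (f := fun s => monomial s (1 : R)),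
    mem_ideal_span_monomial_image]
  refine forall₂_congr fun m _ => ?_
  simp only [Set.mem_singleton_iff, exists_eq_left, Finsupp.le_def, Finset.subset_iff,
    Finsupp.mem_support_iff, Finsupp.finsetSum_apply, Finsupp.single_apply, Finset.sum_ite_eq']
  refine forall_congr' fun i => ?_
  split_ifs with h <;> simp [h, Nat.one_le_iff_ne_zero]

section killOutside

variable [DecidableEq σ]

noncomputable def killOutside (E : Finset σ) : MvPolynomial σ R →ₐ[R] MvPolynomial σ R :=
  aeval fun i => if i ∈ E then X i else 0

theorem killOutside_monomial (E : Finset σ) (m : σ →₀ ℕ) (c : R) :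
    killOutside E (monomial m c) = if m.support ⊆ E then monomial m c else 0 := by
  rw [killOutside, aeval_monomial, monomial_eq, algebraMap_eq, Finsupp.prod]
  split_ifs with h
  · congr 1
    exact Finset.prod_congr rfl fun i hi => by rw [if_pos (h hi)]
  · obtain ⟨i, hi, hiE⟩ := Finset.not_subset.mp h
    rw [Finset.prod_eq_zero hi (by rw [if_neg hiE, zero_pow (Finsupp.mem_support_iff.mp hi)]),
      mul_zero]

theorem coeff_killOutside (E : Finset σ) (p : MvPolynomial σ R) (m : σ →₀ ℕ) :
    coeff m (killOutside E p) = if m.support ⊆ E then coeff m p else 0 := by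
  induction p using MvPolynomial.induction_on' with
  | monomial m' c =>
    rw [killOutside_monomial]
    rcases eq_or_ne m' m with rfl | hne
    · split_ifs <;> simp
    · split_ifs <;> simp [coeff_monomial, hne]
  | add p q hp hq =>
    rw [map_add, coeff_add, hp, hq, coeff_add]
    split_ifs <;> simp

theorem killOutside_killOutside (E D : Finset σ) (p : MvPolynomial σ R) :
    killOutside E (killOutside D p) = killOutside (E ∩ D) p := by
  ext m
  simp only [coeff_killOutside, Finset.subset_inter_iff, ite_and]

theorem killOutside_idem (E : Finset σ) (p : MvPolynomial σ R) :
    killOutside E (killOutside E p) = killOutside E p := by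
  rw [killOutside_killOutside, Finset.inter_self]

theorem killOutside_eq_zero_iff {E : Finset σ} {p : MvPolynomial σ R} :
    killOutside E p = 0 ↔ ∀ m ∈ p.support, ¬ m.support ⊆ E := by
  simp only [MvPolynomial.ext_iff, coeff_killOutside, coeff_zero, mem_support_iff]
  refine forall_congr' fun m => ?_
  split_ifs with h <;> tauto

theorem exists_killOutside_eq {𝒮 : Finset (Finset σ)} (h𝒮 : IsLowerSet (𝒮 : Set (Finset σ)))
    (q : Finset σ → MvPolynomial σ R) (hq : ∀ E ∈ 𝒮, ∀ C ⊆ E, killOutside C (q E) = q C) :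
    ∃ p : MvPolynomial σ R, ∀ E ∈ 𝒮, killOutside E p = q E := by
  set T := (𝒮.biUnion fun D => (q D).support).filter fun m => m.support ∈ 𝒮
  refine ⟨∑ m ∈ T, monomial m (coeff m (q m.support)), fun E hE => ?_⟩
  have hcoeff : ∀ m : σ →₀ ℕ, m.support ∈ 𝒮 →
      coeff m (∑ m ∈ T, monomial m (coeff m (q m.support))) = coeff m (q m.support) := by
    intro m hm
    rw [coeff_sum, Finset.sum_eq_single m (fun b _ hb => by rw [coeff_monomial, if_neg hb])]
    · rw [coeff_monomial, if_pos rfl]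
    · intro hmT
      rw [coeff_monomial, if_pos rfl, ← notMem_support_iff]
      exact fun hm' => hmT (Finset.mem_filter.mpr ⟨Finset.mem_biUnion.mpr ⟨_, hm, hm'⟩, hm⟩)
  ext m
  rw [coeff_killOutside, ← hq E hE E le_rfl, coeff_killOutside]
  split_ifs with hmE
  · rw [hcoeff m (h𝒮 hmE hE), ← hq E hE _ hmE, coeff_killOutside, if_pos subset_rfl]
  · rfl

theorem killOutside_mem_span_prod_X {F : Finset σ} {p : MvPolynomial σ R}
    (h : ∀ E ⊂ F, killOutside E p = 0) : killOutside F p ∈ Ideal.span {∏ i ∈ F, X i} := by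
  rw [mem_span_prod_X_iff]
  intro m hm
  rw [mem_support_iff, coeff_killOutside] at hm
  split_ifs at hm with hmF
  · by_contra hFm
    exact killOutside_eq_zero_iff.mp (h _ (hmF.ssubset_of_not_subset hFm)) m
      (mem_support_iff.mpr hm) subset_rfl
  · exact absurd rfl hm

end killOutside

end MvPolynomial

section StructureSheaf

variable {σ : Type} [DecidableEq σ]

theorem faceIdeal_powFaces_eq_span_X (E : Finset σ) :
    faceIdeal (powFaces E) = Ideal.span (X '' (↑E)ᶜ) := by
  apply le_antisymm
  · rw [faceIdeal, Ideal.span_le]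
    rintro _ ⟨S, hS, rfl⟩
    obtain ⟨i, hiS, hiE⟩ := Finset.not_subset.mp hS
    rw [← Finset.mul_prod_erase S _ hiS]
    exact Ideal.mul_mem_right _ _ (Ideal.subset_span ⟨i, hiE, rfl⟩)
  · rw [Ideal.span_le]
    rintro _ ⟨i, hi, rfl⟩
    exact Ideal.subset_span ⟨{i}, by simpa [powFaces] using hi, by simp⟩

theorem mem_faceIdeal_powFaces_iff {E : Finset σ} {p : MvPolynomial σ ℝ} :
    p ∈ faceIdeal (powFaces E) ↔ killOutside E p = 0 := by
  simp only [faceIdeal_powFaces_eq_span_X, mem_ideal_span_X_image, killOutside_eq_zero_iff,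
    Finset.not_subset, Finsupp.mem_support_iff, Set.mem_compl_iff, Finset.mem_coe, and_comm]

theorem faceIdeal_powFaces_anti {C E : Finset σ} (hCE : C ⊆ E) :
    faceIdeal (powFaces E) ≤ faceIdeal (powFaces C) := fun p hp => by
  rw [mem_faceIdeal_powFaces_iff] at hp ⊢
  rw [← Finset.inter_eq_left.mpr hCE, ← killOutside_killOutside, hp, map_zero]

theorem stalkA_eq_stalkA_iff {E : Finset σ} {p q : MvPolynomial σ ℝ} :
    stalkA E p = stalkA E q ↔ killOutside E p = killOutside E q := by
  rw [stalkA, Ideal.Quotient.mk_eq_mk_iff_sub_mem, mem_faceIdeal_powFaces_iff, map_sub,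
    sub_eq_zero]

theorem exists_stalkA_eq_of_compatible (F : Finset σ)
    (s : ∀ E : Finset σ, E ⊂ F → MvPolynomial σ ℝ ⧸ faceIdeal (powFaces E))
    (hs : ∀ (C E : Finset σ) (hC : C ⊂ F) (hE : E ⊂ F) (hCE : C ⊆ E),
      Ideal.Quotient.factor (faceIdeal_powFaces_anti hCE) (s E hE) = s C hC) :
    ∃ p : MvPolynomial σ ℝ, ∀ (E : Finset σ) (hE : E ⊂ F), stalkA E p = s E hE := by
  choose r hr using fun E (hE : E ⊂ F) => Ideal.Quotient.mk_surjective (s E hE)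
  have hlower : IsLowerSet (F.ssubsets : Set (Finset σ)) := fun E C hCE hE => by
    simpa using LE.le.trans_ssubset hCE (Finset.mem_ssubsets.mp hE)
  obtain ⟨p, hp⟩ := exists_killOutside_eq hlower
    (fun E => if hE : E ⊂ F then killOutside E (r E hE) else 0) fun E hE C hCE => by
      have hE : E ⊂ F := Finset.mem_ssubsets.mp hE
      have hC : C ⊂ F := hCE.trans_ssubset hE
      have hrC : stalkA C (r E hE) = stalkA C (r C hC) := by
        rw [stalkA, hr C hC, ← hs C E hC hE hCE, ← hr E hE, Ideal.Quotient.factor_mk]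
      rw [dif_pos hE, dif_pos hC, killOutside_killOutside, Finset.inter_eq_left.mpr hCE,
        stalkA_eq_stalkA_iff.mp hrC]
  refine ⟨p, fun E hE => ?_⟩
  rw [← hr E hE, ← stalkA, stalkA_eq_stalkA_iff, hp E (Finset.mem_ssubsets.mpr hE), dif_pos hE]

theorem forall_ssubset_stalkA_eq_zero_iff (F : Finset σ) (p : MvPolynomial σ ℝ) :
    (∀ E : Finset σ, E ⊂ F → stalkA E p = 0) ↔
      p ∈ faceIdeal (powFaces F) ⊔ Ideal.span {∏ i ∈ F, (X i : MvPolynomial σ ℝ)} := by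
  simp only [stalkA, Ideal.Quotient.eq_zero_iff_mem]
  constructor
  · intro h
    rw [← sub_add_cancel p (killOutside F p)]
    refine Ideal.add_mem _ (Ideal.mem_sup_left ?_) (Ideal.mem_sup_right ?_)
    · rw [mem_faceIdeal_powFaces_iff, map_sub, killOutside_idem, sub_self]
    · exact killOutside_mem_span_prod_X fun E hEF => mem_faceIdeal_powFaces_iff.mp (h E hEF)
  · intro hp E hEF
    refine sup_le (faceIdeal_powFaces_anti hEF.subset) ?_ hp
    rw [Ideal.span_singleton_le_iff_mem]
    exact Ideal.subset_span ⟨F, fun hFE => hEF.not_subset hFE, rfl⟩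

end StructureSheaf

theorem exists_ne_zero_forall_add_mul_ne_zero {ι : Type*} [Fintype ι] (a b : ι → ℝ) :
    ∃ t ≠ 0, ∀ i, a i ≠ 0 → a i + t * b i ≠ 0 := by
  classical
  obtain ⟨t, ht⟩ := Infinite.exists_notMem_finset
    (insert (0 : ℝ) (Finset.univ.image fun i => -a i / b i))
  refine ⟨t, fun h => ht (h ▸ Finset.mem_insert_self _ _), fun i hai hroot => ht ?_⟩
  have hbi : b i ≠ 0 := fun hbi => hai (by simpa [hbi] using hroot)
  refine Finset.mem_insert_of_mem (Finset.mem_image.mpr ⟨i, Finset.mem_univ _, ?_⟩)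
  rw [div_eq_iff hbi]
  linarith

namespace IsSimple

variable {σ : Type} [Fintype σ] {V : AffineSubspace ℝ (σ → ℝ)}

theorem resF_surjective (hsimple : IsSimple V) {F : Finset σ} (hF : IsFlat V F) :
    Function.Surjective (resF V F) := by
  rw [← LinearMap.range_eq_top]
  apply Submodule.eq_top_of_finrank_eq
  have := LinearMap.finrank_range_add_finrank_ker (resF V F)
  have := hsimple F hF
  simp only [Module.finrank_fintype_fun_eq_card, Fintype.card_coe]
  omega

theorem isFlat_of_subset (hsimple : IsSimple V) {E F : Finset σ} (hF : IsFlat V F)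
    (hEF : E ⊆ F) : IsFlat V E := by
  classical
  obtain ⟨w, hw⟩ := hsimple.resF_surjective hF fun j => if (j : σ) ∈ E then 0 else 1
  have hwF : ∀ i ∈ F, (w : σ → ℝ) i = if i ∈ E then 0 else 1 := fun i hi =>
    congrFun hw ⟨i, hi⟩
  obtain ⟨x, hxV, hx⟩ := hF
  obtain ⟨t, ht0, ht⟩ := exists_ne_zero_forall_add_mul_ne_zero x w
  refine ⟨t • (w : σ → ℝ) +ᵥ x, AffineSubspace.vadd_mem_of_mem_direction
    (V.direction.smul_mem t w.2) hxV, fun i => ?_⟩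
  simp only [vadd_eq_add, Pi.add_apply, Pi.smul_apply, smul_eq_mul, add_comm (t * _)]
  by_cases hiF : i ∈ F
  · rw [(hx i).mp hiF, hwF i hiF]
    split_ifs with hiE <;> simp [hiE, ht0]
  · have hxi : x i ≠ 0 := fun h => hiF ((hx i).mpr h)
    exact iff_of_false (fun hiE => hiF (hEF hiE)) (ht i hxi)

end IsSimple

theorem stmt10 (V : AffineSubspace ℝ (I → ℝ))
    (hsimple : IsSimple V) (F : Finset I) (hF : IsFlat V F) :
    -- surjectivity of A(F) → A(∂F):
    (∀ s : ∀ E : Finset I, IsFlat V E → E ⊂ F → (MvPolynomial I ℝ ⧸ faceIdeal (powFaces E)),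
      (∀ (E E' : Finset I) (hE : IsFlat V E) (hE' : IsFlat V E') (h : E ⊆ E')
          (hEF : E ⊂ F) (hE'F : E' ⊂ F)
          (hle : faceIdeal (powFaces E') ≤ faceIdeal (powFaces E)),
        Ideal.Quotient.factor hle (s E' hE' hE'F) = s E hE hEF) →
      ∃ p : MvPolynomial I ℝ, ∀ (E : Finset I) (hE : IsFlat V E) (hEF : E ⊂ F),
        stalkA E p = s E hE hEF) ∧
    -- the kernel of A(F) → A(∂F) is generated by ∏_{i ∈ F} e_i:
    (∀ p : MvPolynomial I ℝ,
      (∀ (E : Finset I), IsFlat V E → E ⊂ F → stalkA E p = 0) ↔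
        p ∈ faceIdeal (powFaces F) ⊔
          Ideal.span {(∏ i ∈ F, (X i : MvPolynomial I ℝ))}) := by
  have hflat : ∀ E : Finset I, E ⊂ F → IsFlat V E := fun E hE =>
    hsimple.isFlat_of_subset hF hE.subset
  refine ⟨fun s hs => ?_, fun p => ?_⟩
  · obtain ⟨p, hp⟩ := exists_stalkA_eq_of_compatible F (fun E hE => s E (hflat E hE) hE)
      fun C E hC hE hCE => hs C E _ _ hCE hC hE _
    exact ⟨p, fun E _ hEF => hp E hEF⟩
  · rw [← forall_ssubset_stalkA_eq_zero_iff]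
    exact forall_congr' fun E => ⟨fun h hEF => h (hflat E hEF) hEF, fun h _ => h⟩
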